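/- For each i ∈ {1,...,8}, the family 𝒵_i is a tiling of the plane: its members have pairwise Lebesgue-null intersections and their union is all of ℝ². -/
import Mathlib

open MeasureTheory Set Filter
open scoped ENNReal

noncomputable section

/-- The basic R-shaped chiral molecule. -/
def Rbase : Set (ℝ × ℝ) := (Icc (0:ℝ) 1 ×ˢ Icc (0:ℝ) 3) ∪ (Icc (1:ℝ) 2 ×ˢ Icc (2:ℝ) 3)

/-- The basic S-shaped (mirror) chiral molecule. -/
def Sbase : Set (ℝ × ℝ) := (Icc (-1:ℝ) 0 ×ˢ Icc (0:ℝ) 3) ∪ (Icc (-2:ℝ) (-1) ×ˢ Icc (2:ℝ) 3)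

/-- Translation of a subset of the plane by a vector. -/
def trSet (v : ℝ × ℝ) (A : Set (ℝ × ℝ)) : Set (ℝ × ℝ) :=
  (fun x => (v.1 + x.1, v.2 + x.2)) '' A

/-- Integer translate of the R molecule. -/
def Rmol (n : ℤ × ℤ) : Set (ℝ × ℝ) := trSet ((n.1 : ℝ), (n.2 : ℝ)) Rbase

/-- Integer translate of the S molecule. -/
def Smol (n : ℤ × ℤ) : Set (ℝ × ℝ) := trSet ((n.1 : ℝ), (n.2 : ℝ)) Sbase

/-- A set is a molecule if it is an integer translate of R or of S. -/
def IsMolecule (E : Set (ℝ × ℝ)) : Prop := ∃ n : ℤ × ℤ, E = Rmol n ∨ E = Smol n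

/-- A chiral family: molecules with pairwise Lebesgue-null intersections. -/
def ChiralFamily (F : Set (Set (ℝ × ℝ))) : Prop :=
  (∀ E ∈ F, IsMolecule E) ∧ ∀ E ∈ F, ∀ E' ∈ F, E ≠ E' → volume (E ∩ E') = 0

/-- The eight modulated phases `𝒵_i`, `i = 1, ..., 8`. -/
def Zphase (i : ℕ) : Set (Set (ℝ × ℝ)) :=
  if i ≤ 4 then {E | ∃ n : ℤ × ℤ, E = Rmol n ∧ (n.2 + n.1) % 4 = (i : ℤ) % 4}
  else {E | ∃ n : ℤ × ℤ, E = Smol n ∧ (n.2 - n.1) % 4 = ((i : ℤ) - 4) % 4}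

/-- Open axis-parallel square of side `r` centered at `x`. -/
def osq (r : ℝ) (x : ℝ × ℝ) : Set (ℝ × ℝ) :=
  Ioo (x.1 - r / 2) (x.1 + r / 2) ×ˢ Ioo (x.2 - r / 2) (x.2 + r / 2)

/-- Euclidean norm on the plane. -/
def enr (x : ℝ × ℝ) : ℝ := Real.sqrt (x.1 ^ 2 + x.2 ^ 2)

lemma mem_trSet {v p : ℝ × ℝ} {A : Set (ℝ × ℝ)} :
    p ∈ trSet v A ↔ (p.1 - v.1, p.2 - v.2) ∈ A := by
  constructor
  · rintro ⟨q, hq, rfl⟩; simpa using hq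
  · intro h; exact ⟨_, h, by simp⟩

lemma Rmol_eq (n : ℤ × ℤ) :
    Rmol n = (Icc (n.1:ℝ) (n.1+1) ×ˢ Icc (n.2:ℝ) (n.2+3)) ∪
      (Icc ((n.1:ℝ)+1) ((n.1:ℝ)+2) ×ˢ Icc ((n.2:ℝ)+2) ((n.2:ℝ)+3)) := by
  ext p
  simp only [Rmol, mem_trSet, Rbase, mem_union, mem_prod, mem_Icc]
  constructor <;> rintro (⟨⟨h1, h2⟩, h3, h4⟩ | ⟨⟨h1, h2⟩, h3, h4⟩)
  · exact Or.inl ⟨⟨by linarith, by linarith⟩, by linarith, by linarith⟩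
  · exact Or.inr ⟨⟨by linarith, by linarith⟩, by linarith, by linarith⟩
  · exact Or.inl ⟨⟨by linarith, by linarith⟩, by linarith, by linarith⟩
  · exact Or.inr ⟨⟨by linarith, by linarith⟩, by linarith, by linarith⟩

lemma Smol_eq (n : ℤ × ℤ) :
    Smol n = (Icc ((n.1:ℝ)-1) (n.1:ℝ) ×ˢ Icc (n.2:ℝ) ((n.2:ℝ)+3)) ∪
      (Icc ((n.1:ℝ)-2) ((n.1:ℝ)-1) ×ˢ Icc ((n.2:ℝ)+2) ((n.2:ℝ)+3)) := by
  ext p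
  simp only [Smol, mem_trSet, Sbase, mem_union, mem_prod, mem_Icc]
  constructor <;> rintro (⟨⟨h1, h2⟩, h3, h4⟩ | ⟨⟨h1, h2⟩, h3, h4⟩)
  · exact Or.inl ⟨⟨by linarith, by linarith⟩, by linarith, by linarith⟩
  · exact Or.inr ⟨⟨by linarith, by linarith⟩, by linarith, by linarith⟩
  · exact Or.inl ⟨⟨by linarith, by linarith⟩, by linarith, by linarith⟩
  · exact Or.inr ⟨⟨by linarith, by linarith⟩, by linarith, by linarith⟩

lemma vol_prod_Icc (a b c d : ℝ) :
    volume (Icc a b ×ˢ Icc c d) = ENNReal.ofReal (b - a) * ENNReal.ofReal (d - c) := by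
  rw [MeasureTheory.Measure.volume_eq_prod, MeasureTheory.Measure.prod_prod,
    Real.volume_Icc, Real.volume_Icc]

lemma null_piece {a b c d a' b' c' d' : ℝ}
    (h : b ≤ a' ∨ b' ≤ a ∨ d ≤ c' ∨ d' ≤ c) :
    volume ((Icc a b ×ˢ Icc c d) ∩ (Icc a' b' ×ˢ Icc c' d')) = 0 := by
  rw [Set.prod_inter_prod, Icc_inter_Icc, Icc_inter_Icc, vol_prod_Icc]
  rcases h with h | h | h | h
  · have : ENNReal.ofReal (b ⊓ b' - a ⊔ a') = 0 := by
      apply ENNReal.ofReal_eq_zero.2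
      have : b ⊓ b' ≤ b := inf_le_left
      have : a ≤ a ⊔ a' := le_sup_left
      have : a' ≤ a ⊔ a' := le_sup_right
      have : b ⊓ b' ≤ a ⊔ a' := le_trans inf_le_left (le_trans h le_sup_right)
      linarith
    rw [this, zero_mul]
  · have : ENNReal.ofReal (b ⊓ b' - a ⊔ a') = 0 := by
      apply ENNReal.ofReal_eq_zero.2
      have : b ⊓ b' ≤ a ⊔ a' := le_trans inf_le_right (le_trans h le_sup_left)
      linarith
    rw [this, zero_mul]
  · have : ENNReal.ofReal (d ⊓ d' - c ⊔ c') = 0 := by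
      apply ENNReal.ofReal_eq_zero.2
      have : d ⊓ d' ≤ c ⊔ c' := le_trans inf_le_left (le_trans h le_sup_right)
      linarith
    rw [this, mul_zero]
  · have : ENNReal.ofReal (d ⊓ d' - c ⊔ c') = 0 := by
      apply ENNReal.ofReal_eq_zero.2
      have : d ⊓ d' ≤ c ⊔ c' := le_trans inf_le_right (le_trans h le_sup_left)
      linarith
    rw [this, mul_zero]

lemma union_inter_union (A B C D : Set (ℝ × ℝ))
    (h1 : volume (A ∩ C) = 0) (h2 : volume (A ∩ D) = 0)
    (h3 : volume (B ∩ C) = 0) (h4 : volume (B ∩ D) = 0) :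
    volume ((A ∪ B) ∩ (C ∪ D)) = 0 := by
  have : (A ∪ B) ∩ (C ∪ D) = (A ∩ C) ∪ (A ∩ D) ∪ ((B ∩ C) ∪ (B ∩ D)) := by
    rw [Set.union_inter_distrib_right, Set.inter_union_distrib_left,
      Set.inter_union_distrib_left]
  rw [this]
  exact measure_union_null (measure_union_null h1 h2) (measure_union_null h3 h4)

lemma R_inter_null {n m : ℤ × ℤ} (hmod : (n.2 + n.1) % 4 = (m.2 + m.1) % 4)
    (hne : n ≠ m) : volume (Rmol n ∩ Rmol m) = 0 := by
  have hne' : ¬(n.1 = m.1 ∧ n.2 = m.2) := by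
    intro ⟨h1, h2⟩; exact hne (Prod.ext h1 h2)
  rw [Rmol_eq n, Rmol_eq m]
  apply union_inter_union
  · apply null_piece
    have h : (n.1 + 1 ≤ m.1 ∨ m.1 + 1 ≤ n.1 ∨ n.2 + 3 ≤ m.2 ∨ m.2 + 3 ≤ n.2) := by omega
    rcases h with h | h | h | h
    · exact Or.inl (by exact_mod_cast Int.cast_le.2 h)
    · exact Or.inr (Or.inl (by exact_mod_cast Int.cast_le.2 h))
    · exact Or.inr (Or.inr (Or.inl (by exact_mod_cast Int.cast_le.2 h)))
    · exact Or.inr (Or.inr (Or.inr (by exact_mod_cast Int.cast_le.2 h)))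
  · apply null_piece
    have h : (n.1 + 1 ≤ m.1 + 1 ∨ m.1 + 2 ≤ n.1 ∨ n.2 + 3 ≤ m.2 + 2 ∨ m.2 + 3 ≤ n.2) := by
      omega
    rcases h with h | h | h | h
    · exact Or.inl (by exact_mod_cast h)
    · exact Or.inr (Or.inl (by exact_mod_cast h))
    · exact Or.inr (Or.inr (Or.inl (by exact_mod_cast h)))
    · exact Or.inr (Or.inr (Or.inr (by exact_mod_cast h)))
  · apply null_piece
    have h : (n.1 + 2 ≤ m.1 ∨ m.1 + 1 ≤ n.1 + 1 ∨ n.2 + 3 ≤ m.2 ∨ m.2 + 3 ≤ n.2 + 2) := by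
      omega
    rcases h with h | h | h | h
    · exact Or.inl (by exact_mod_cast h)
    · exact Or.inr (Or.inl (by exact_mod_cast h))
    · exact Or.inr (Or.inr (Or.inl (by exact_mod_cast h)))
    · exact Or.inr (Or.inr (Or.inr (by exact_mod_cast h)))
  · apply null_piece
    have h : (n.1 + 2 ≤ m.1 + 1 ∨ m.1 + 2 ≤ n.1 + 1 ∨ n.2 + 3 ≤ m.2 + 2 ∨ m.2 + 3 ≤ n.2 + 2) := by
      omega
    rcases h with h | h | h | h
    · exact Or.inl (by exact_mod_cast h)
    · exact Or.inr (Or.inl (by exact_mod_cast h))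
    · exact Or.inr (Or.inr (Or.inl (by exact_mod_cast h)))
    · exact Or.inr (Or.inr (Or.inr (by exact_mod_cast h)))

lemma S_inter_null {n m : ℤ × ℤ} (hmod : (n.2 - n.1) % 4 = (m.2 - m.1) % 4)
    (hne : n ≠ m) : volume (Smol n ∩ Smol m) = 0 := by
  have hne' : ¬(n.1 = m.1 ∧ n.2 = m.2) := by
    intro ⟨h1, h2⟩; exact hne (Prod.ext h1 h2)
  rw [Smol_eq n, Smol_eq m]
  apply union_inter_union
  · apply null_piece
    have h : (n.1 ≤ m.1 - 1 ∨ m.1 ≤ n.1 - 1 ∨ n.2 + 3 ≤ m.2 ∨ m.2 + 3 ≤ n.2) := by omega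
    rcases h with h | h | h | h
    · exact Or.inl (by exact_mod_cast h)
    · exact Or.inr (Or.inl (by exact_mod_cast h))
    · exact Or.inr (Or.inr (Or.inl (by exact_mod_cast h)))
    · exact Or.inr (Or.inr (Or.inr (by exact_mod_cast h)))
  · apply null_piece
    have h : (n.1 ≤ m.1 - 2 ∨ m.1 - 1 ≤ n.1 - 1 ∨ n.2 + 3 ≤ m.2 + 2 ∨ m.2 + 3 ≤ n.2) := by
      omega
    rcases h with h | h | h | h
    · exact Or.inl (by exact_mod_cast h)
    · exact Or.inr (Or.inl (by exact_mod_cast h))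
    · exact Or.inr (Or.inr (Or.inl (by exact_mod_cast h)))
    · exact Or.inr (Or.inr (Or.inr (by exact_mod_cast h)))
  · apply null_piece
    have h : (n.1 - 1 ≤ m.1 - 1 ∨ m.1 ≤ n.1 - 2 ∨ n.2 + 3 ≤ m.2 ∨ m.2 + 3 ≤ n.2 + 2) := by
      omega
    rcases h with h | h | h | h
    · exact Or.inl (by exact_mod_cast h)
    · exact Or.inr (Or.inl (by exact_mod_cast h))
    · exact Or.inr (Or.inr (Or.inl (by exact_mod_cast h)))
    · exact Or.inr (Or.inr (Or.inr (by exact_mod_cast h)))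
  · apply null_piece
    have h : (n.1 - 1 ≤ m.1 - 2 ∨ m.1 - 1 ≤ n.1 - 2 ∨ n.2 + 3 ≤ m.2 + 2 ∨ m.2 + 3 ≤ n.2 + 2) := by
      omega
    rcases h with h | h | h | h
    · exact Or.inl (by exact_mod_cast h)
    · exact Or.inr (Or.inl (by exact_mod_cast h))
    · exact Or.inr (Or.inr (Or.inl (by exact_mod_cast h)))
    · exact Or.inr (Or.inr (Or.inr (by exact_mod_cast h)))

lemma R_cover (c : ℤ) (p : ℝ × ℝ) : ∃ n : ℤ × ℤ, (n.2 + n.1) % 4 = c % 4 ∧ p ∈ Rmol n := by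
  set a := ⌊p.1⌋ with ha
  set b := ⌊p.2⌋ with hb
  have hxa : (a : ℝ) ≤ p.1 := Int.floor_le p.1
  have hxa' : p.1 < a + 1 := Int.lt_floor_add_one p.1
  have hyb : (b : ℝ) ≤ p.2 := Int.floor_le p.2
  have hyb' : p.2 < b + 1 := Int.lt_floor_add_one p.2
  have hk : (b + a - c) % 4 = 0 ∨ (b + a - c) % 4 = 1 ∨ (b + a - c) % 4 = 2 ∨
      (b + a - c) % 4 = 3 := by omega
  rcases hk with hk | hk | hk | hk
  · refine ⟨(a, b), by omega, ?_⟩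
    rw [Rmol_eq]
    exact Or.inl ⟨⟨hxa, by linarith⟩, hyb, by linarith⟩
  · refine ⟨(a, b - 1), by omega, ?_⟩
    rw [Rmol_eq]
    refine Or.inl ⟨⟨hxa, by linarith⟩, ?_, ?_⟩ <;> push_cast <;> linarith
  · refine ⟨(a, b - 2), by omega, ?_⟩
    rw [Rmol_eq]
    refine Or.inl ⟨⟨hxa, by linarith⟩, ?_, ?_⟩ <;> push_cast <;> linarith
  · refine ⟨(a - 1, b - 2), by omega, ?_⟩
    rw [Rmol_eq]
    refine Or.inr ⟨⟨?_, ?_⟩, ?_, ?_⟩ <;> push_cast <;> linarith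

lemma S_cover (c : ℤ) (p : ℝ × ℝ) : ∃ n : ℤ × ℤ, (n.2 - n.1) % 4 = c % 4 ∧ p ∈ Smol n := by
  set a := ⌊p.1⌋ with ha
  set b := ⌊p.2⌋ with hb
  have hxa : (a : ℝ) ≤ p.1 := Int.floor_le p.1
  have hxa' : p.1 < a + 1 := Int.lt_floor_add_one p.1
  have hyb : (b : ℝ) ≤ p.2 := Int.floor_le p.2
  have hyb' : p.2 < b + 1 := Int.lt_floor_add_one p.2
  have hk : (b - a - 1 - c) % 4 = 0 ∨ (b - a - 1 - c) % 4 = 1 ∨ (b - a - 1 - c) % 4 = 2 ∨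
      (b - a - 1 - c) % 4 = 3 := by omega
  rcases hk with hk | hk | hk | hk
  · refine ⟨(a + 1, b), by omega, ?_⟩
    rw [Smol_eq]
    refine Or.inl ⟨⟨?_, ?_⟩, ?_, ?_⟩ <;> push_cast <;> linarith
  · refine ⟨(a + 1, b - 1), by omega, ?_⟩
    rw [Smol_eq]
    refine Or.inl ⟨⟨?_, ?_⟩, ?_, ?_⟩ <;> push_cast <;> linarith
  · refine ⟨(a + 1, b - 2), by omega, ?_⟩
    rw [Smol_eq]
    refine Or.inl ⟨⟨?_, ?_⟩, ?_, ?_⟩ <;> push_cast <;> linarith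
  · refine ⟨(a + 2, b - 2), by omega, ?_⟩
    rw [Smol_eq]
    refine Or.inr ⟨⟨?_, ?_⟩, ?_, ?_⟩ <;> push_cast <;> linarith

/-- each modulated phase `𝒵_i` is a tiling of the plane. -/
theorem stmt3 (i : ℕ) (h1 : 1 ≤ i) (h8 : i ≤ 8) :
    ChiralFamily (Zphase i) ∧ ⋃₀ Zphase i = univ := by
  constructor
  · constructor
    · intro E hE
      unfold Zphase at hE
      split_ifs at hE with h4
      · obtain ⟨n, hn, -⟩ := hE; exact ⟨n, Or.inl hn⟩
      · obtain ⟨n, hn, -⟩ := hE; exact ⟨n, Or.inr hn⟩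
    · intro E hE E' hE' hne
      unfold Zphase at hE hE'
      split_ifs at hE hE' with h4
      · obtain ⟨n, rfl, hn⟩ := hE
        obtain ⟨m, rfl, hm⟩ := hE'
        exact R_inter_null (hn.trans hm.symm) (fun h => hne (by rw [h]))
      · obtain ⟨n, rfl, hn⟩ := hE
        obtain ⟨m, rfl, hm⟩ := hE'
        exact S_inter_null (hn.trans hm.symm) (fun h => hne (by rw [h]))
  · apply Set.eq_univ_of_forall
    intro p
    rw [Set.mem_sUnion]
    unfold Zphase
    split_ifs with h4
    · obtain ⟨n, hmod, hmem⟩ := R_cover (i : ℤ) p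
      exact ⟨Rmol n, ⟨n, rfl, hmod⟩, hmem⟩
    · obtain ⟨n, hmod, hmem⟩ := S_cover ((i : ℤ) - 4) p
      exact ⟨Smol n, ⟨n, rfl, hmod⟩, hmem⟩
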